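/- arXiv:2306.06727 — 4 statements merged into one kernel-verified Lean document; each statement's English description precedes it below -/
import Mathlib

section
/- Let f : X → Y be a bijection between finite metric spaces and let D_Y = s·D_X + Δ_s be a metric decomposition. Then the distortion of the induced bijection f̂ between the normalized spaces X/||D_X||_∞ and Y/||D_Y||_∞ satisfies dis(f̂) ≤ 2·||Δ_s||_∞ / ||D_Y||_∞ for every s > 0. -/
noncomputable def maxnorm {n : ℕ} (M : Fin n → Fin n → ℝ) : ℝ :=
  sSup (Set.range fun p : Fin n × Fin n => |M p.1 p.2|)

def IsMetricD {n : ℕ} (d : Fin n → Fin n → ℝ) : Prop :=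
  (∀ i, d i i = 0) ∧ (∀ i j, d i j = d j i) ∧
  (∀ i j k, d i k ≤ d i j + d j k) ∧ (∀ i j, i ≠ j → 0 < d i j)

noncomputable def diamD {n : ℕ} (d : Fin n → Fin n → ℝ) : ℝ :=
  sSup (Set.range fun p : Fin n × Fin n => d p.1 p.2)

/-- `h(s) = ‖D_Y − s·D_X‖_∞`. -/
noncomputable def hFun {n : ℕ} (dX dY : Fin n → Fin n → ℝ) (s : ℝ) : ℝ :=
  maxnorm (fun i j => dY i j - s * dX i j)

lemma abs_le_maxnorm {n : ℕ} (M : Fin n → Fin n → ℝ) (p : Fin n × Fin n) :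
    |M p.1 p.2| ≤ maxnorm M :=
  le_csSup ((Set.finite_range _).bddAbove) ⟨p, rfl⟩

lemma exists_maxnorm {n : ℕ} [Nonempty (Fin n)] (M : Fin n → Fin n → ℝ) :
    ∃ p : Fin n × Fin n, maxnorm M = |M p.1 p.2| := by
  have h := Set.Nonempty.csSup_mem (s := Set.range fun p : Fin n × Fin n => |M p.1 p.2|)
    (Set.range_nonempty _) (Set.finite_range _)
  obtain ⟨p, hp⟩ := h
  exact ⟨p, hp.symm⟩

lemma metric_nonneg {n : ℕ} {d : Fin n → Fin n → ℝ} (h : IsMetricD d) (i j : Fin n) :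
    0 ≤ d i j := by
  obtain ⟨h0, hs, ht, _⟩ := h
  have := ht i j i
  rw [h0 i, hs j i] at this
  linarith

/-- The distortion of the induced bijection between the diameter-normalized
spaces is at most `2‖Δ_s‖_∞ / ‖D_Y‖_∞` for every `s > 0`. -/
theorem stmt8 {n : ℕ} (dX dY : Fin n → Fin n → ℝ)
    (hX : IsMetricD dX) (hY : IsMetricD dY)
    (hnX : 0 < maxnorm dX) (hnY : 0 < maxnorm dY) :
    ∀ s : ℝ, 0 < s →
      sSup (Set.range fun p : Fin n × Fin n =>
          |dX p.1 p.2 / maxnorm dX - dY p.1 p.2 / maxnorm dY|)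
        ≤ 2 * hFun dX dY s / maxnorm dY := by
  intro s hs
  have hne : Nonempty (Fin n) := by
    rcases n with _ | m
    · exfalso
      simp [maxnorm, Set.range_eq_empty, Real.sSup_empty] at hnX
    · exact ⟨0⟩
  set h := hFun dX dY s with hh
  have hbound : ∀ p : Fin n × Fin n, |dY p.1 p.2 - s * dX p.1 p.2| ≤ h := fun p =>
    abs_le_maxnorm (fun i j => dY i j - s * dX i j) p
  have hpos : 0 ≤ h := le_trans (abs_nonneg _) (hbound (Classical.arbitrary _))
  -- entries bounds
  have hXe : ∀ p : Fin n × Fin n, dX p.1 p.2 ≤ maxnorm dX := fun p => by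
    have := abs_le_maxnorm dX p
    rwa [abs_of_nonneg (metric_nonneg hX _ _)] at this
  have hYe : ∀ p : Fin n × Fin n, dY p.1 p.2 ≤ maxnorm dY := fun p => by
    have := abs_le_maxnorm dY p
    rwa [abs_of_nonneg (metric_nonneg hY _ _)] at this
  -- |maxnorm dY - s * maxnorm dX| ≤ h
  have hA : s * maxnorm dX ≤ maxnorm dY + h := by
    obtain ⟨p, hp⟩ := exists_maxnorm dX
    rw [hp, abs_of_nonneg (metric_nonneg hX _ _)]
    have h1 := hbound p
    have h2 := hYe p
    have := abs_le.1 h1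
    linarith [this.1, this.2]
  have hB : maxnorm dY ≤ s * maxnorm dX + h := by
    obtain ⟨q, hq⟩ := exists_maxnorm dY
    rw [hq, abs_of_nonneg (metric_nonneg hY _ _)]
    have h1 := (abs_le.1 (hbound q)).2
    have h2 : s * dX q.1 q.2 ≤ s * maxnorm dX :=
      mul_le_mul_of_nonneg_left (hXe q) hs.le
    linarith
  apply csSup_le (Set.range_nonempty _)
  rintro x ⟨p, rfl⟩
  simp only
  have key : |dX p.1 p.2 / maxnorm dX - dY p.1 p.2 / maxnorm dY| * maxnorm dY ≤ 2 * h := by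
    rw [show |dX p.1 p.2 / maxnorm dX - dY p.1 p.2 / maxnorm dY| * maxnorm dY
        = |(dX p.1 p.2 / maxnorm dX - dY p.1 p.2 / maxnorm dY) * maxnorm dY| from by
      rw [abs_mul, abs_of_pos hnY]]
    have expand : (dX p.1 p.2 / maxnorm dX - dY p.1 p.2 / maxnorm dY) * maxnorm dY
        = (dX p.1 p.2 / maxnorm dX) * (maxnorm dY - s * maxnorm dX)
          + (s * dX p.1 p.2 - dY p.1 p.2) := by
      field_simp
      ring
    rw [expand]
    have hr0 : 0 ≤ dX p.1 p.2 / maxnorm dX := div_nonneg (metric_nonneg hX _ _) hnX.le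
    have hr1 : dX p.1 p.2 / maxnorm dX ≤ 1 := (div_le_one hnX).2 (hXe p)
    calc |(dX p.1 p.2 / maxnorm dX) * (maxnorm dY - s * maxnorm dX)
          + (s * dX p.1 p.2 - dY p.1 p.2)|
        ≤ |(dX p.1 p.2 / maxnorm dX) * (maxnorm dY - s * maxnorm dX)|
          + |s * dX p.1 p.2 - dY p.1 p.2| := abs_add_le _ _
      _ ≤ 1 * h + h := by
          gcongr
          · rw [abs_mul]
            have : |maxnorm dY - s * maxnorm dX| ≤ h := abs_le.2 ⟨by linarith, by linarith⟩
            have habs : |dX p.1 p.2 / maxnorm dX| ≤ 1 := by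
              rw [abs_of_nonneg hr0]; exact hr1
            calc |dX p.1 p.2 / maxnorm dX| * |maxnorm dY - s * maxnorm dX|
                ≤ 1 * h := mul_le_mul habs this (abs_nonneg _) zero_le_one
              _ = 1 * h := rfl
          · rw [abs_sub_comm]; exact hbound p
      _ = 2 * h := by ring
  exact (le_div_iff₀ hnY).2 key
end

section
/- Let 0 < ε < 1 and let f : X → Y be a bijection between finite metric spaces satisfying (1−ε)·d_X(x,x')² ≤ d_Y(f(x),f(x'))² ≤ (1+ε)·d_X(x,x')² for all x, x' ∈ X. Then the bottleneck distance between the Vietoris-Rips persistence diagrams satisfies d_B(X, f(X)) ≤ ε·diam(X). -/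
/-- Sup-norm distance between two points of the plane. -/
noncomputable def supDist (p q : ℝ × ℝ) : ℝ := max |p.1 - q.1| |p.2 - q.2|

/-- Distance from a point to the diagonal (in the sup norm). -/
noncomputable def diagCost (p : ℝ × ℝ) : ℝ := (p.2 - p.1) / 2

/-- A partial matching between the off-diagonal points of two persistence diagrams;
unmatched points are implicitly matched to the diagonal. -/
def IsMatching (A B : Finset (ℝ × ℝ)) (M : Finset ((ℝ × ℝ) × (ℝ × ℝ))) : Prop :=
  (∀ pq ∈ M, pq.1 ∈ A ∧ pq.2 ∈ B) ∧
  (∀ pq ∈ M, ∀ pq' ∈ M, pq.1 = pq'.1 → pq = pq') ∧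
  (∀ pq ∈ M, ∀ pq' ∈ M, pq.2 = pq'.2 → pq = pq')

/-- Cost of a matching: the largest sup-norm displacement, where unmatched
points are sent to the diagonal. -/
noncomputable def matchCost (A B : Finset (ℝ × ℝ)) (M : Finset ((ℝ × ℝ) × (ℝ × ℝ))) : ℝ :=
  sSup ({0} ∪ ((fun pq : (ℝ × ℝ) × (ℝ × ℝ) => supDist pq.1 pq.2) '' (M : Set ((ℝ × ℝ) × (ℝ × ℝ))))
    ∪ (diagCost '' {p | p ∈ A ∧ ∀ pq ∈ M, pq.1 ≠ p})
    ∪ (diagCost '' {q | q ∈ B ∧ ∀ pq ∈ M, pq.2 ≠ q}))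

/-- Bottleneck distance between two persistence diagrams (finite multisets of
off-diagonal points, with the diagonal implicitly available with infinite multiplicity). -/
noncomputable def dB (A B : Finset (ℝ × ℝ)) : ℝ :=
  sInf ((matchCost A B) '' {M | IsMatching A B M})

/-- Scaling of a persistence diagram: `sA = {s·a : a ∈ A}`. -/
noncomputable def scaleD (s : ℝ) (A : Finset (ℝ × ℝ)) : Finset (ℝ × ℝ) :=
  A.image fun p => (s * p.1, s * p.2)

/-- Johnson-Lindenstrauss homology preservation:
`d_B(X, f(X)) ≤ ε·diam(X)` for a JL-type bijection `f` (identified with the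
identity on indices via distance matrices). -/
theorem stmt12 (dgm : (n : ℕ) → (Fin n → Fin n → ℝ) → Finset (ℝ × ℝ))
    (hstab : ∀ (n : ℕ) (d e : Fin n → Fin n → ℝ), IsMetricD d → IsMetricD e →
      dB (dgm n d) (dgm n e) ≤ maxnorm (fun i j => d i j - e i j))
    {n : ℕ} (dX dY : Fin n → Fin n → ℝ)
    (hX : IsMetricD dX) (hY : IsMetricD dY)
    (ε : ℝ) (hε0 : 0 < ε) (hε1 : ε < 1)
    (hJL : ∀ i j, (1 - ε) * dX i j ^ 2 ≤ dY i j ^ 2 ∧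
                  dY i j ^ 2 ≤ (1 + ε) * dX i j ^ 2) :
    dB (dgm n dX) (dgm n dY) ≤ ε * diamD dX := by
  have hXnn : ∀ i j, 0 ≤ dX i j := by
    intro i j
    rcases eq_or_ne i j with rfl | h
    · simp [hX.1 i]
    · exact (hX.2.2.2 i j h).le
  have hYnn : ∀ i j, 0 ≤ dY i j := by
    intro i j
    rcases eq_or_ne i j with rfl | h
    · simp [hY.1 i]
    · exact (hY.2.2.2 i j h).le
  have key : ∀ i j, |dX i j - dY i j| ≤ ε * dX i j := by
    intro i j
    have h1 := (hJL i j).1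
    have h2 := (hJL i j).2
    have hx := hXnn i j
    have hy := hYnn i j
    have hub : dY i j ≤ (1 + ε) * dX i j := by
      have h : dY i j ^ 2 ≤ ((1 + ε) * dX i j) ^ 2 := by nlinarith
      exact (pow_le_pow_iff_left₀ hy (by nlinarith) two_ne_zero).mp h
    have hlb : (1 - ε) * dX i j ≤ dY i j := by
      have h : ((1 - ε) * dX i j) ^ 2 ≤ dY i j ^ 2 := by nlinarith
      exact (pow_le_pow_iff_left₀ (by nlinarith) hy two_ne_zero).mp h
    rw [abs_le]
    constructor <;> linarith
  -- diamD is an upper bound for dX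
  have hbdd : BddAbove (Set.range fun p : Fin n × Fin n => dX p.1 p.2) :=
    (Set.finite_range _).bddAbove
  have hdle : ∀ i j, dX i j ≤ diamD dX := fun i j =>
    le_csSup hbdd ⟨(i, j), rfl⟩
  have hdiamnn : 0 ≤ diamD dX := by
    rcases Nat.eq_zero_or_pos n with rfl | hn
    · simp [diamD, Set.range_eq_empty, Real.sSup_empty]
    · have i : Fin n := ⟨0, hn⟩
      have := hdle i i
      rw [hX.1 i] at this
      exact this
  calc dB (dgm n dX) (dgm n dY) ≤ maxnorm (fun i j => dX i j - dY i j) :=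
        hstab n dX dY hX hY
    _ ≤ ε * diamD dX := by
        apply Real.sSup_le
        · rintro x ⟨⟨i, j⟩, rfl⟩
          calc |dX i j - dY i j| ≤ ε * dX i j := key i j
            _ ≤ ε * diamD dX := by
                exact mul_le_mul_of_nonneg_left (hdle i j) hε0.le
        · positivity
end

section
/- Let 0 < ε < 1 and let f : X → Y be a bijection between finite non-trivial metric spaces satisfying (1−ε)·d_X(x,x')² ≤ d_Y(f(x),f(x'))² ≤ (1+ε)·d_X(x,x')² for all x, x' ∈ X. Then the normalized bottleneck distance satisfies d_N(X, f(X)) ≤ ε. -/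
/-- Normalized bottleneck distance: bottleneck distance between the Vietoris-Rips
persistence diagrams of the diameter-normalized metric spaces. -/
noncomputable def dN (dgm : (n : ℕ) → (Fin n → Fin n → ℝ) → Finset (ℝ × ℝ))
    {n m : ℕ} (dX : Fin n → Fin n → ℝ) (dY : Fin m → Fin m → ℝ) : ℝ :=
  dB (dgm n fun i j => dX i j / diamD dX) (dgm m fun i j => dY i j / diamD dY)


lemma isMetricD_scale {n : ℕ} (d : Fin n → Fin n → ℝ) (hd : IsMetricD d)
    (D : ℝ) (hD : 0 < D) : IsMetricD (fun i j => d i j / D) := by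
  obtain ⟨h0, hs, ht, hp⟩ := hd
  refine ⟨fun i => by simp [h0 i], fun i j => by simp [hs i j], fun i j k => ?_,
    fun i j hij => div_pos (hp i j hij) hD⟩
  rw [← add_div]
  exact (div_le_div_iff_of_pos_right hD).mpr (ht i j k)

/-- For a JL-type bijection `f`, the normalized bottleneck distance satisfies
`d_N(X, f(X)) ≤ ε`. -/
theorem stmt13 (dgm : (n : ℕ) → (Fin n → Fin n → ℝ) → Finset (ℝ × ℝ))
    (hstab : ∀ (n : ℕ) (d e : Fin n → Fin n → ℝ), IsMetricD d → IsMetricD e →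
      dB (dgm n d) (dgm n e) ≤ maxnorm (fun i j => d i j - e i j))
    {n : ℕ} (dX dY : Fin n → Fin n → ℝ)
    (hX : IsMetricD dX) (hY : IsMetricD dY)
    (hdX : 0 < diamD dX) (hdY : 0 < diamD dY)
    (ε : ℝ) (hε0 : 0 < ε) (hε1 : ε < 1)
    (hJL : ∀ i j, (1 - ε) * dX i j ^ 2 ≤ dY i j ^ 2 ∧
                  dY i j ^ 2 ≤ (1 + ε) * dX i j ^ 2) :
    dN dgm dX dY ≤ ε := by
  -- notation
  set DX := diamD dX with hDX
  set DY := diamD dY with hDYdef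
  have hn : Nonempty (Fin n × Fin n) := by
    rcases Nat.eq_zero_or_pos n with h | h
    · exfalso
      subst h
      have : DX = 0 := by
        simp [hDX, diamD, Set.range_eq_empty, Real.sSup_empty]
      linarith
    · exact ⟨⟨⟨0, h⟩, ⟨0, h⟩⟩⟩
  have hXnn : ∀ i j, 0 ≤ dX i j := by
    intro i j
    rcases eq_or_ne i j with rfl | hij
    · simp [hX.1 i]
    · exact (hX.2.2.2 i j hij).le
  have hYnn : ∀ i j, 0 ≤ dY i j := by
    intro i j
    rcases eq_or_ne i j with rfl | hij
    · simp [hY.1 i]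
    · exact (hY.2.2.2 i j hij).le
  set a := Real.sqrt (1 - ε) with ha_def
  set b := Real.sqrt (1 + ε) with hb_def
  have ha0 : 0 < a := Real.sqrt_pos.mpr (by linarith)
  have hb0 : 0 < b := Real.sqrt_pos.mpr (by linarith)
  have ha2 : a ^ 2 = 1 - ε := Real.sq_sqrt (by linarith)
  have hb2 : b ^ 2 = 1 + ε := Real.sq_sqrt (by linarith)
  have hab : a ≤ b := Real.sqrt_le_sqrt (by linarith)
  have hlow : ∀ i j, a * dX i j ≤ dY i j := by
    intro i j
    have h := (hJL i j).1
    have := Real.sqrt_le_sqrt h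
    rwa [Real.sqrt_mul (by linarith) _, Real.sqrt_sq (hXnn i j),
      Real.sqrt_sq (hYnn i j)] at this
  have hhigh : ∀ i j, dY i j ≤ b * dX i j := by
    intro i j
    have h := (hJL i j).2
    have := Real.sqrt_le_sqrt h
    rwa [Real.sqrt_mul (by linarith) _, Real.sqrt_sq (hXnn i j),
      Real.sqrt_sq (hYnn i j)] at this
  have hbddX : BddAbove (Set.range fun p : Fin n × Fin n => dX p.1 p.2) :=
    (Set.finite_range _).bddAbove
  have hbddY : BddAbove (Set.range fun p : Fin n × Fin n => dY p.1 p.2) :=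
    (Set.finite_range _).bddAbove
  have hubX : ∀ i j, dX i j ≤ DX := fun i j => le_csSup hbddX ⟨(i, j), rfl⟩
  have hubY : ∀ i j, dY i j ≤ DY := fun i j => le_csSup hbddY ⟨(i, j), rfl⟩
  have hDYub : DY ≤ b * DX := by
    apply csSup_le (Set.range_nonempty _)
    rintro x ⟨⟨i, j⟩, rfl⟩
    exact (hhigh i j).trans (mul_le_mul_of_nonneg_left (hubX i j) hb0.le)
  have hDYlb : a * DX ≤ DY := by
    rw [mul_comm, ← le_div_iff₀ ha0]
    apply csSup_le (Set.range_nonempty _)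
    rintro x ⟨⟨i, j⟩, rfl⟩
    rw [le_div_iff₀ ha0]
    calc dX i j * a = a * dX i j := mul_comm _ _
    _ ≤ dY i j := hlow i j
    _ ≤ DY := hubY i j
  have key : 1 - a / b ≤ ε := by
    have h1 : (1 - ε) * b ≤ a := by
      rw [ha_def, ← Real.sqrt_sq (mul_nonneg (by linarith) hb0.le)]
      apply Real.sqrt_le_sqrt
      nlinarith [hb2, mul_nonneg (mul_nonneg hε0.le hε0.le) (by linarith : (0:ℝ) ≤ 1 - ε)]
    have : 1 - ε ≤ a / b := (le_div_iff₀ hb0).mpr h1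
    linarith
  -- apply stability
  have hmX : IsMetricD (fun i j => dX i j / DX) := isMetricD_scale dX hX DX hdX
  have hmY : IsMetricD (fun i j => dY i j / DY) := isMetricD_scale dY hY DY hdY
  have hstab' := hstab n _ _ hmX hmY
  refine le_trans hstab' ?_
  apply csSup_le (Set.range_nonempty _)
  rintro x ⟨⟨i, j⟩, rfl⟩
  simp only
  rw [abs_sub_le_iff]
  set u := dX i j / DX with hu_def
  set v := dY i j / DY with hv_def
  have hu0 : 0 ≤ u := div_nonneg (hXnn i j) hdX.le
  have hv0 : 0 ≤ v := div_nonneg (hYnn i j) hdY.le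
  have hu1 : u ≤ 1 := (div_le_one hdX).mpr (hubX i j)
  have hv1 : v ≤ 1 := (div_le_one hdY).mpr (hubY i j)
  have h1 : a / b * u ≤ v := by
    rw [hu_def, hv_def, div_mul_div_comm]
    exact div_le_div₀ (hYnn i j) (hlow i j) hdY hDYub
  have h2 : v ≤ b / a * u := by
    rw [hu_def, hv_def, div_mul_div_comm]
    exact div_le_div₀ (mul_nonneg hb0.le (hXnn i j)) (hhigh i j) (mul_pos ha0 hdX) hDYlb
  have habq : a / b ≤ 1 := (div_le_one hb0).mpr hab
  have habq0 : 0 < a / b := div_pos ha0 hb0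
  constructor
  · -- u - v ≤ ε
    nlinarith [h1, mul_nonneg (sub_nonneg.mpr hu1) (sub_nonneg.mpr habq)]
  · -- v - u ≤ ε
    rcases le_total u (a / b) with hc | hc
    · have hprod : (a / b) * (b / a) = 1 := by field_simp
      have hba1 : 1 ≤ b / a := (le_div_iff₀ ha0).mpr (by linarith)
      nlinarith [h2, mul_le_mul_of_nonneg_right hc (by linarith : (0:ℝ) ≤ b / a - 1)]
    · linarith
end

section
/- Let f : X → Y be a k-biLipschitz bijection between finite non-trivial metric spaces with k ≥ 1. Then the normalized bottleneck distance satisfies d_N(X, Y) ≤ ((k² − 1)/k) · diam(X)/diam(Y). -/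
/-!
Stability bounds `d_N(X, Y)` by the largest entrywise gap between the normalized distance matrices
`dX / diam X` and `dY / diam Y`. For a pair at distances `a` in `X` and `b` in `Y`, with `A = diam X`
and `B = diam Y`, the biLipschitz condition pins `b / B` between `a / (k B)` and `k a / B`, and
applied to the diameters it gives `A / k ≤ B ≤ k A`; together with `a ≤ A` these bound
`|a / A - b / B|` by `(k - 1 / k) · A / B`.
-/

theorem abs_div_sub_div_le_of_biLipschitz {k a b A B : ℝ} (hk : 0 < k) (hB : 0 < B)
    (haA : a ≤ A) (hab : a ≤ k * b) (hba : b ≤ k * a)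
    (hAB : A ≤ k * B) (hBA : B ≤ k * A) :
    |a / A - b / B| ≤ (k ^ 2 - 1) / k * (A / B) := by
  have hA : 0 < A := pos_of_mul_pos_right (hB.trans_le hBA) hk.le
  rw [abs_sub_le_iff]
  constructor
  · rw [div_sub_div _ _ hA.ne' hB.ne', div_mul_div_comm,
      div_le_div_iff₀ (by positivity) (by positivity)]
    nlinarith [mul_nonneg (sub_nonneg.2 haA) (sub_nonneg.2 hAB),
      mul_le_mul_of_nonneg_left hab hA.le, mul_le_mul_of_nonneg_left hBA hA.le]
  · rw [div_sub_div _ _ hB.ne' hA.ne', div_mul_div_comm,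
      div_le_div_iff₀ (by positivity) (by positivity)]
    nlinarith [mul_nonneg (sub_nonneg.2 haA) (sub_nonneg.2 hBA),
      mul_le_mul_of_nonneg_left hba hA.le, mul_le_mul_of_nonneg_left hAB hA.le]

section DistanceMatrix

variable {n : ℕ}

theorem IsMetricD.nonneg {d : Fin n → Fin n → ℝ} (hd : IsMetricD d) (i j : Fin n) :
    0 ≤ d i j := by
  rcases eq_or_ne i j with rfl | hij
  · exact (hd.1 i).ge
  · exact (hd.2.2.2 i j hij).le

theorem IsMetricD.div_const {d : Fin n → Fin n → ℝ} (hd : IsMetricD d) {c : ℝ} (hc : 0 < c) :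
    IsMetricD fun i j => d i j / c := by
  obtain ⟨hzero, hsymm, htri, hpos⟩ := hd
  refine ⟨fun i => by simp [hzero], fun i j => congrArg (· / c) (hsymm i j), fun i j l => ?_,
    fun i j hij => div_pos (hpos i j hij) hc⟩
  rw [← add_div]
  exact div_le_div_of_nonneg_right (htri i j l) hc.le

theorem le_diamD (d : Fin n → Fin n → ℝ) (i j : Fin n) : d i j ≤ diamD d :=
  le_csSup (Set.finite_range _).bddAbove ⟨(i, j), rfl⟩

theorem diamD_le_mul_diamD {d e : Fin n → Fin n → ℝ} {k : ℝ} (hk : 0 ≤ k)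
    (he : ∀ i j, 0 ≤ e i j) (hde : ∀ i j, d i j ≤ k * e i j) : diamD d ≤ k * diamD e := by
  refine Real.sSup_le ?_ (mul_nonneg hk (Real.sSup_nonneg ?_))
  · rintro _ ⟨⟨i, j⟩, rfl⟩
    exact (hde i j).trans (mul_le_mul_of_nonneg_left (le_diamD e i j) hk)
  · rintro _ ⟨⟨i, j⟩, rfl⟩
    exact he i j

theorem maxnorm_le {M : Fin n → Fin n → ℝ} {c : ℝ} (hc : 0 ≤ c) (hM : ∀ i j, |M i j| ≤ c) :
    maxnorm M ≤ c :=
  Real.sSup_le (by rintro _ ⟨⟨i, j⟩, rfl⟩; exact hM i j) hc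

end DistanceMatrix

/-- The bijection `f : X → Y` is encoded by indexing both spaces by `Fin n`, so that `dY i j` is
the distance between `f i` and `f j`. -/
theorem stmt19 (dgm : (n : ℕ) → (Fin n → Fin n → ℝ) → Finset (ℝ × ℝ))
    (hstab : ∀ (n : ℕ) (d e : Fin n → Fin n → ℝ), IsMetricD d → IsMetricD e →
      dB (dgm n d) (dgm n e) ≤ maxnorm (fun i j => d i j - e i j))
    {n : ℕ} (dX dY : Fin n → Fin n → ℝ)
    (hX : IsMetricD dX) (hY : IsMetricD dY)
    (hdX : 0 < diamD dX) (hdY : 0 < diamD dY)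
    (k : ℝ) (hk : 1 ≤ k)
    (hbl : ∀ i j, (1 / k) * dX i j ≤ dY i j ∧ dY i j ≤ k * dX i j) :
    dN dgm dX dY ≤ ((k ^ 2 - 1) / k) * (diamD dX / diamD dY) := by
  have hk0 : 0 < k := one_pos.trans_le hk
  have hXY : ∀ i j, dX i j ≤ k * dY i j := fun i j => by
    have := mul_le_mul_of_nonneg_left (hbl i j).1 hk0.le
    rwa [← mul_assoc, mul_one_div_cancel hk0.ne', one_mul] at this
  have hYX : ∀ i j, dY i j ≤ k * dX i j := fun i j => (hbl i j).2
  have hbound : 0 ≤ (k ^ 2 - 1) / k * (diamD dX / diamD dY) :=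
    mul_nonneg (div_nonneg (by nlinarith) hk0.le) (div_nonneg hdX.le hdY.le)
  refine (hstab n _ _ (hX.div_const hdX) (hY.div_const hdY)).trans
    (maxnorm_le hbound fun i j => ?_)
  exact abs_div_sub_div_le_of_biLipschitz hk0 hdY (le_diamD dX i j)
    (hXY i j) (hYX i j) (diamD_le_mul_diamD hk0.le hY.nonneg hXY)
    (diamD_le_mul_diamD hk0.le hX.nonneg hYX)
end
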